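/- Let X be a real Banach space, let A, B : X ⇉ X* be monotone operators with dom A ∩ dom B ≠ ∅, let C := {(x, x) : x ∈ X} ⊆ X × X be the diagonal, and let T : X × X ⇉ X* × X* be defined by T(x, y) := A x × B y. If A + B is maximally monotone, then T + N_C is maximally monotone. -/

import Mathlib

open Set Pointwise

variable {X : Type*} [NormedAddCommGroup X] [NormedSpace ℝ X] [CompleteSpace X]

/-- The graph of a set-valued operator from `X` to its continuous dual. -/
def graphOf (A : X → Set (X →L[ℝ] ℝ)) : Set (X × (X →L[ℝ] ℝ)) := {p | p.2 ∈ A p.1}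

/-- The domain of a set-valued operator. -/
def domOf (A : X → Set (X →L[ℝ] ℝ)) : Set X := {x | (A x).Nonempty}

/-- Monotonicity of a set-valued operator. -/
def IsMonotoneOp (A : X → Set (X →L[ℝ] ℝ)) : Prop :=
  ∀ ⦃x y : X⦄ ⦃x' y' : X →L[ℝ] ℝ⦄, x' ∈ A x → y' ∈ A y → 0 ≤ (x' - y') (x - y)

/-- Maximal monotonicity: monotone and no proper monotone extension of the graph. -/
def IsMaxMonotoneOp (A : X → Set (X →L[ℝ] ℝ)) : Prop :=
  IsMonotoneOp A ∧ ∀ B : X → Set (X →L[ℝ] ℝ), IsMonotoneOp B →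
    graphOf A ⊆ graphOf B → graphOf B = graphOf A

/-- A linear relation: the graph is a linear subspace of `X × X*`. -/
def IsLinearRelationOp (A : X → Set (X →L[ℝ] ℝ)) : Prop :=
  ∃ S : Submodule ℝ (X × (X →L[ℝ] ℝ)), (S : Set (X × (X →L[ℝ] ℝ))) = graphOf A

/-- The pointwise (Minkowski) sum of two set-valued operators. -/
def opSum (A B : X → Set (X →L[ℝ] ℝ)) : X → Set (X →L[ℝ] ℝ) :=
  fun x => {s | ∃ a ∈ A x, ∃ b ∈ B x, s = a + b}

/-- The duality pairing on `(X × X) × (X* × X*)`: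
`⟨(x, y), (x*, y*)⟩ = ⟨x, x*⟩ + ⟨y, y*⟩`. -/
def pair2 (v : X × X) (w : (X →L[ℝ] ℝ) × (X →L[ℝ] ℝ)) : ℝ := w.1 v.1 + w.2 v.2

/-- The graph of a set-valued operator from `X × X` to `X* × X*`. -/
def graphOf2 (T : X × X → Set ((X →L[ℝ] ℝ) × (X →L[ℝ] ℝ))) :
    Set ((X × X) × ((X →L[ℝ] ℝ) × (X →L[ℝ] ℝ))) := {p | p.2 ∈ T p.1}

/-- Monotonicity of a set-valued operator on the product space. -/
def IsMonotoneOp2 (T : X × X → Set ((X →L[ℝ] ℝ) × (X →L[ℝ] ℝ))) : Prop :=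
  ∀ ⦃u v : X × X⦄ ⦃u' v' : (X →L[ℝ] ℝ) × (X →L[ℝ] ℝ)⦄,
    u' ∈ T u → v' ∈ T v → 0 ≤ pair2 (u - v) (u' - v')

/-- Maximal monotonicity on the product space. -/
def IsMaxMonotoneOp2 (T : X × X → Set ((X →L[ℝ] ℝ) × (X →L[ℝ] ℝ))) : Prop :=
  IsMonotoneOp2 T ∧ ∀ S : X × X → Set ((X →L[ℝ] ℝ) × (X →L[ℝ] ℝ)), IsMonotoneOp2 S →
    graphOf2 T ⊆ graphOf2 S → graphOf2 S = graphOf2 T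

/-- The pointwise (Minkowski) sum of two set-valued operators on the product space. -/
def opSum2 (S T : X × X → Set ((X →L[ℝ] ℝ) × (X →L[ℝ] ℝ))) :
    X × X → Set ((X →L[ℝ] ℝ) × (X →L[ℝ] ℝ)) :=
  fun w => {s | ∃ a ∈ S w, ∃ b ∈ T w, s = a + b}

/-- The normal cone operator of a set `C ⊆ X × X` (empty value outside `C`). -/
def normalConeOp2 (C : Set (X × X)) (w : X × X) : Set ((X →L[ℝ] ℝ) × (X →L[ℝ] ℝ)) :=
  {w' | w ∈ C ∧ ∀ v ∈ C, pair2 (v - w) w' ≤ 0}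

/-!
Since `N_C (x, x) = {(φ, -φ)}`, an element `s` lies in `(T + N_C) (x, y)` exactly when `x = y` and
`s₁ + s₂ ∈ (A + B) x`; pairing over the diagonal only sees `s₁ + s₂`, so monotonicity of `T + N_C`
is that of `A + B`. For maximality, a monotone extension `S` contains `((x₀, x₀), (a₀ + φ, b₀ - φ))`
for fixed `a₀ ∈ A x₀`, `b₀ ∈ B x₀` and every `φ ∈ X*`; pairing with any `(u, s) ∈ gra S` gives
`c - φ (u₁ - u₂) ≥ 0` with `c` independent of `φ`, which forces `u₁ = u₂`. Adding the two
components of `S` on the diagonal is then a monotone extension of `A + B`, hence equal to it.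
-/

section

variable {E : Type*} [NormedAddCommGroup E] [NormedSpace ℝ E] {A B : E → Set (E →L[ℝ] ℝ)}

lemma pair2_diagonal_sub (x y : E) (w : (E →L[ℝ] ℝ) × (E →L[ℝ] ℝ)) :
    pair2 ((x, x) - (y, y)) w = (w.1 + w.2) (x - y) := by
  simp only [pair2, Prod.mk_sub_mk, add_apply]

lemma mem_normalConeOp2_diagonal {w : E × E} {w' : (E →L[ℝ] ℝ) × (E →L[ℝ] ℝ)} :
    w' ∈ normalConeOp2 (diagonal E) w ↔ w.1 = w.2 ∧ w'.1 + w'.2 = 0 := by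
  obtain ⟨x, y⟩ := w
  constructor
  · rintro ⟨rfl : x = y, hw'⟩
    have hle : ∀ z, (w'.1 + w'.2) z ≤ 0 := fun z => by
      simpa only [pair2_diagonal_sub, add_sub_cancel_left] using hw' (x + z, x + z) rfl
    refine ⟨rfl, ContinuousLinearMap.ext fun z => ?_⟩
    have hneg := hle (-z)
    rw [map_neg] at hneg
    rw [zero_apply]
    linarith [hle z]
  · rintro ⟨rfl : x = y, hw'⟩
    refine ⟨rfl, ?_⟩
    rintro ⟨v, v'⟩ (rfl : v = v')
    rw [pair2_diagonal_sub, hw', zero_apply]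

lemma mem_opSum2_prod_normalConeOp2_diagonal {w : E × E} {s : (E →L[ℝ] ℝ) × (E →L[ℝ] ℝ)} :
    s ∈ opSum2 (fun p => A p.1 ×ˢ B p.2) (normalConeOp2 (diagonal E)) w ↔
      w.1 = w.2 ∧ s.1 + s.2 ∈ opSum A B w.1 := by
  constructor
  · rintro ⟨a, ⟨ha₁, ha₂⟩, n, hn, rfl⟩
    obtain ⟨hw, hn₀⟩ := mem_normalConeOp2_diagonal.mp hn
    refine ⟨hw, a.1, ha₁, a.2, hw ▸ ha₂, ?_⟩
    calc (a + n).1 + (a + n).2 = a.1 + a.2 + (n.1 + n.2) := by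
          simp only [Prod.fst_add, Prod.snd_add]; abel
      _ = a.1 + a.2 := by rw [hn₀, add_zero]
  · rintro ⟨hw, a, ha, b, hb, hs⟩
    refine ⟨(a, b), ⟨ha, hw ▸ hb⟩, (s.1 - a, s.2 - b),
      mem_normalConeOp2_diagonal.mpr ⟨hw, ?_⟩, ?_⟩
    · rw [sub_add_sub_comm, hs, sub_self]
    · ext <;> simp

lemma IsMonotoneOp.opSum2_prod_normalConeOp2_diagonal (h : IsMonotoneOp (opSum A B)) :
    IsMonotoneOp2 (opSum2 (fun p => A p.1 ×ˢ B p.2) (normalConeOp2 (diagonal E))) := by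
  rintro ⟨x, x'⟩ ⟨y, y'⟩ u' v' hu hv
  obtain ⟨rfl : x = x', hu⟩ := mem_opSum2_prod_normalConeOp2_diagonal.mp hu
  obtain ⟨rfl : y = y', hv⟩ := mem_opSum2_prod_normalConeOp2_diagonal.mp hv
  have := h hu hv
  rw [pair2_diagonal_sub]
  simpa only [Prod.fst_sub, Prod.snd_sub, sub_add_sub_comm] using this

lemma fst_eq_snd_of_isMonotoneOp2 {S : E × E → Set ((E →L[ℝ] ℝ) × (E →L[ℝ] ℝ))}
    (hS : IsMonotoneOp2 S) {x₀ : E} {a₀ b₀ : E →L[ℝ] ℝ}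
    (h₀ : ∀ φ : E →L[ℝ] ℝ, (a₀ + φ, b₀ - φ) ∈ S (x₀, x₀))
    {u : E × E} {s : (E →L[ℝ] ℝ) × (E →L[ℝ] ℝ)} (hs : s ∈ S u) : u.1 = u.2 := by
  by_contra hne
  obtain ⟨f, hf⟩ := SeparatingDual.exists_eq_one (R := ℝ) (sub_ne_zero.mpr hne)
  set c := pair2 (u - (x₀, x₀)) (s - (a₀, b₀))
  have hpair : pair2 (u - (x₀, x₀)) (s - (a₀ + (c + 1) • f, b₀ - (c + 1) • f)) = -1 := by
    have hf' : f u.1 = f u.2 + 1 := by rw [← sub_eq_iff_eq_add', ← map_sub, hf]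
    simp only [c, pair2, Prod.fst_sub, Prod.snd_sub, sub_apply,
      add_apply, smul_apply, smul_eq_mul, map_sub, hf']
    ring
  linarith [hS hs (h₀ ((c + 1) • f))]

def diagonalSum (S : E × E → Set ((E →L[ℝ] ℝ) × (E →L[ℝ] ℝ))) : E → Set (E →L[ℝ] ℝ) :=
  fun x => {r | ∃ s ∈ S (x, x), s.1 + s.2 = r}

lemma IsMonotoneOp2.diagonalSum {S : E × E → Set ((E →L[ℝ] ℝ) × (E →L[ℝ] ℝ))}
    (hS : IsMonotoneOp2 S) : IsMonotoneOp (diagonalSum S) := by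
  rintro x y _ _ ⟨s, hs, rfl⟩ ⟨t, ht, rfl⟩
  have := hS hs ht
  rw [pair2_diagonal_sub] at this
  simpa only [Prod.fst_sub, Prod.snd_sub, sub_add_sub_comm] using this

lemma graphOf_opSum_subset_diagonalSum {S : E × E → Set ((E →L[ℝ] ℝ) × (E →L[ℝ] ℝ))}
    (hsub : graphOf2 (opSum2 (fun p => A p.1 ×ˢ B p.2) (normalConeOp2 (diagonal E))) ⊆
      graphOf2 S) :
    graphOf (opSum A B) ⊆ graphOf (diagonalSum S) := by
  rintro ⟨x, _⟩ ⟨a, ha, b, hb, rfl⟩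
  exact ⟨(a, b), @hsub ((x, x), (a, b))
    (mem_opSum2_prod_normalConeOp2_diagonal.mpr ⟨rfl, a, ha, b, hb, rfl⟩), rfl⟩

end

theorem stmt5_general (A B : X → Set (X →L[ℝ] ℝ))
    (hdom : (domOf A ∩ domOf B).Nonempty)
    (C : Set (X × X)) (hC : C = {p : X × X | p.1 = p.2})
    (T : X × X → Set ((X →L[ℝ] ℝ) × (X →L[ℝ] ℝ)))
    (hT : T = fun p => (A p.1) ×ˢ (B p.2))
    (hsum : IsMaxMonotoneOp (opSum A B)) :
    IsMaxMonotoneOp2 (opSum2 T (normalConeOp2 C)) := by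
  subst hC hT
  obtain ⟨x₀, ⟨a₀, ha₀⟩, ⟨b₀, hb₀⟩⟩ := hdom
  refine ⟨hsum.1.opSum2_prod_normalConeOp2_diagonal, fun S hS hsub => ?_⟩
  refine Subset.antisymm ?_ hsub
  rintro ⟨⟨x, y⟩, s⟩ (hs : s ∈ S (x, y))
  have h₀ : ∀ φ, (a₀ + φ, b₀ - φ) ∈ S (x₀, x₀) := fun φ =>
    @hsub ((x₀, x₀), (a₀ + φ, b₀ - φ))
      (mem_opSum2_prod_normalConeOp2_diagonal.mpr ⟨rfl, a₀, ha₀, b₀, hb₀, by dsimp only; abel⟩)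
  obtain rfl : x = y := fst_eq_snd_of_isMonotoneOp2 hS h₀ hs
  have hdiag : graphOf (diagonalSum S) = graphOf (opSum A B) :=
    hsum.2 _ hS.diagonalSum (graphOf_opSum_subset_diagonalSum hsub)
  have hmem : (x, s.1 + s.2) ∈ graphOf (diagonalSum S) := ⟨s, hs, rfl⟩
  rw [hdiag] at hmem
  exact mem_opSum2_prod_normalConeOp2_diagonal.mpr ⟨rfl, hmem⟩

/-- For monotone `A, B` with `dom A ∩ dom B ≠ ∅`, the diagonal `C` and
`T (x, y) := A x × B y`: if `A + B` is maximally monotone, then so is `T + N_C`. -/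
theorem stmt5 (A B : X → Set (X →L[ℝ] ℝ))
    (hA : IsMonotoneOp A) (hB : IsMonotoneOp B)
    (hdom : (domOf A ∩ domOf B).Nonempty)
    (C : Set (X × X)) (hC : C = {p : X × X | p.1 = p.2})
    (T : X × X → Set ((X →L[ℝ] ℝ) × (X →L[ℝ] ℝ)))
    (hT : T = fun p => (A p.1) ×ˢ (B p.2))
    (hsum : IsMaxMonotoneOp (opSum A B)) :
    IsMaxMonotoneOp2 (opSum2 T (normalConeOp2 C)) :=
  stmt5_general A B hdom C hC T hT hsum
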